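/- arXiv:1402.4377 — 2 statements merged into one kernel-verified Lean document; each statement's English description precedes it below -/
import Mathlib

section
/- For all z, w in the unit disk, the integral ∫₀¹ t·w̄/(1-t·w̄·z)⁴ dt satisfies |∫₀¹ t·w̄/(1-t·w̄·z)⁴ dt| ≤ C/|1-w̄z|³ for an absolute constant C. -/
/-!
For `t ∈ [0, 1]` and `‖a‖ ≤ 1` the factor `1 - t a` is bounded below both by `1 - t` and by
`‖1 - a‖ - (1 - t)`, hence `3 ‖1 - t a‖ ≥ (1 - t) + ‖1 - a‖`. The integrand is therefore dominated
by `3⁴ / ((1 - t) + ‖1 - a‖)⁴`, whose integral over `[0, 1]` is at most `3³ / ‖1 - a‖³`.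
-/

open MeasureTheory Complex

lemma integral_inv_one_sub_add_pow_le {d : ℝ} (hd : 0 < d) {n : ℕ} (hn : n ≠ 0) :
    ∫ t in (0 : ℝ)..1, ((1 - t + d) ^ (n + 1))⁻¹ ≤ (n * d ^ n)⁻¹ := by
  have hshift : ∫ t in (0 : ℝ)..1, ((1 - t + d) ^ (n + 1))⁻¹
      = ∫ x in d..1 + d, x ^ (-((n + 1 : ℕ) : ℤ)) := by
    have := intervalIntegral.integral_comp_sub_left
      (fun x : ℝ => x ^ (-((n + 1 : ℕ) : ℤ))) (1 + d) (a := 0) (b := 1)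
    simp only [add_sub_cancel_left, sub_zero] at this
    rw [← this]
    congr 1 with t
    rw [zpow_neg, zpow_natCast]; ring_nf
  have h0 : (0 : ℝ) ∉ Set.uIcc d (1 + d) := by
    rw [Set.uIcc_of_le (by linarith)]; exact fun h => (h.1.trans_lt' hd).false
  rw [hshift, integral_zpow (Or.inr ⟨by omega, h0⟩)]
  push_cast
  rw [show -((n : ℤ) + 1) + 1 = -(n : ℤ) by ring, zpow_neg, zpow_neg, zpow_natCast, zpow_natCast]
  rw [show -((n : ℝ) + 1) + 1 = -n by ring, div_neg, ← neg_div, neg_sub, mul_inv,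
    ← div_eq_inv_mul]
  gcongr
  simp only [sub_le_self_iff, inv_nonneg]
  positivity

lemma one_sub_add_norm_one_sub_le_three_mul_norm {a : ℂ} (ha : ‖a‖ ≤ 1) {t : ℝ}
    (ht₀ : 0 ≤ t) (ht₁ : t ≤ 1) : 1 - t + ‖1 - a‖ ≤ 3 * ‖1 - t * a‖ := by
  have hnear : 1 - t ≤ ‖1 - t * a‖ := by
    have hta : ‖(t : ℂ) * a‖ ≤ t := by
      rw [norm_mul, norm_real, Real.norm_of_nonneg ht₀]
      exact mul_le_of_le_one_right ht₀ ha
    linarith [norm_sub_norm_le (1 : ℂ) (t * a), norm_one (α := ℂ)]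
  have hfar : ‖1 - a‖ ≤ ‖1 - t * a‖ + (1 - t) := calc
    ‖1 - a‖ = ‖(1 - t * a) + (t - 1 : ℝ) * a‖ := by push_cast; ring_nf
    _ ≤ ‖1 - t * a‖ + ‖((t - 1 : ℝ) : ℂ) * a‖ := norm_add_le _ _
    _ ≤ ‖1 - t * a‖ + (1 - t) := by
      rw [norm_mul, norm_real, Real.norm_of_nonpos (by linarith)]
      nlinarith [norm_nonneg a]
  linarith

theorem norm_integral_mul_div_one_sub_mul_pow_le {a b : ℂ} (ha : ‖a‖ ≤ 1) (ha₁ : a ≠ 1)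
    (hb : ‖b‖ ≤ 1) {n : ℕ} (hn : n ≠ 0) :
    ‖∫ t in (0 : ℝ)..1, (t : ℂ) * b / (1 - t * a) ^ (n + 1)‖ ≤
      3 ^ (n + 1) / n / ‖1 - a‖ ^ n := by
  set d := ‖1 - a‖
  have hd : 0 < d := norm_pos_iff.2 (sub_ne_zero.2 ha₁.symm)
  have hpt : ∀ t ∈ Set.Ioc (0 : ℝ) 1,
      ‖(t : ℂ) * b / (1 - t * a) ^ (n + 1)‖ ≤ 3 ^ (n + 1) * ((1 - t + d) ^ (n + 1))⁻¹ := by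
    rintro t ⟨ht₀, ht₁⟩
    have hnum : ‖(t : ℂ) * b‖ ≤ 1 := by
      rw [norm_mul, norm_real, Real.norm_of_nonneg ht₀.le]
      exact mul_le_one₀ ht₁ (norm_nonneg b) hb
    have hden : (1 - t + d) / 3 ≤ ‖1 - t * a‖ := by
      linarith [one_sub_add_norm_one_sub_le_three_mul_norm ha ht₀.le ht₁]
    calc ‖(t : ℂ) * b / (1 - t * a) ^ (n + 1)‖
          = ‖(t : ℂ) * b‖ / ‖1 - t * a‖ ^ (n + 1) := by rw [norm_div, norm_pow]
      _ ≤ 1 / ((1 - t + d) / 3) ^ (n + 1) := by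
          have : 0 < 1 - t + d := by linarith
          gcongr
      _ = 3 ^ (n + 1) * ((1 - t + d) ^ (n + 1))⁻¹ := by
          rw [div_pow, one_div_div, div_eq_mul_inv]
  have hint : IntervalIntegrable (fun t : ℝ => 3 ^ (n + 1) * ((1 - t + d) ^ (n + 1))⁻¹)
      volume 0 1 := by
    refine ContinuousOn.intervalIntegrable ?_
    refine continuousOn_const.mul (ContinuousOn.inv₀ (by fun_prop) fun t ht => ?_)
    rw [Set.uIcc_of_le zero_le_one] at ht
    exact pow_ne_zero _ (by linarith [ht.2])
  calc ‖∫ t in (0 : ℝ)..1, (t : ℂ) * b / (1 - t * a) ^ (n + 1)‖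
      ≤ ∫ t in (0 : ℝ)..1, 3 ^ (n + 1) * ((1 - t + d) ^ (n + 1))⁻¹ :=
        intervalIntegral.norm_integral_le_of_norm_le zero_le_one (.of_forall hpt) hint
    _ = 3 ^ (n + 1) * ∫ t in (0 : ℝ)..1, ((1 - t + d) ^ (n + 1))⁻¹ :=
        intervalIntegral.integral_const_mul _ _
    _ ≤ 3 ^ (n + 1) * (n * d ^ n)⁻¹ := by
        gcongr; exact integral_inv_one_sub_add_pow_le hd hn
    _ = 3 ^ (n + 1) / n / d ^ n := by ring

/-- Uniform kernel estimate: |∫₀¹ t w̄ /(1-t w̄ z)⁴ dt| ≤ C/|1-w̄z|³ for z,w in the disk. -/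
theorem stmt2 :
    ∃ C > (0 : ℝ), ∀ z ∈ Metric.ball (0 : ℂ) 1, ∀ w ∈ Metric.ball (0 : ℂ) 1,
      ‖∫ t in (0 : ℝ)..1, ((t : ℂ) * (starRingEnd ℂ) w) /
          (1 - (t : ℂ) * (starRingEnd ℂ) w * z) ^ 4‖ ≤
        C / ‖1 - (starRingEnd ℂ) w * z‖ ^ 3 := by
  refine ⟨27, by norm_num, fun z hz w hw => ?_⟩
  rw [mem_ball_zero_iff] at hz hw
  have hb : ‖(starRingEnd ℂ) w‖ ≤ 1 := by rw [norm_conj]; exact hw.le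
  have ha : ‖(starRingEnd ℂ) w * z‖ < 1 := by
    rw [norm_mul, norm_conj]; exact mul_lt_one_of_nonneg_of_lt_one_left (norm_nonneg w) hw hz.le
  have ha₁ : (starRingEnd ℂ) w * z ≠ 1 := fun h => by simp [h] at ha
  have key := norm_integral_mul_div_one_sub_mul_pow_le ha.le ha₁ hb (n := 3) three_ne_zero
  simp only [mul_assoc]
  convert key using 2
  norm_num
end

section
/- Let f be analytic on the unit disk with f(0)=0, and define the backward shift S_b(f)(z) = f(z)/z (extended analytically at 0). If f' belongs to the weighted Bergman space L¹_a(D,(1-|z|²)dm), then for all z ∈ D, |(S_b f)'(z)| ≤ C ∫_D |f'(w)|(1-|w|²)/|1-w̄z|³ dm(w) for an absolute constant C. -/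
/-!
The key tool is the sub-mean-value property: the mean of a holomorphic function over a disc is its
value at the centre (integrate the Taylor series termwise; the moments `∫ w ^ n`, `n ≥ 1`, vanish
by rotation invariance). Write `I(z)` for the integral on the right. If `|1 - v̄ z| ≤ A (1 - |v|)`,
then on the disc of radius `(1 - |v|) / 2` about `v` the kernel `(1 - |w|²) / |1 - w̄ z|³` is at
least a multiple of `(1 - |v|)⁻²`, i.e. of the reciprocal of the disc's area, so averaging `|f'|`
over that disc gives `|f'(v)| ≤ C_A I(z)`. This covers every `v` on the segment `[0, z]` (`A = 2`)
and every `|v| ≤ 3/4` (`A = 8`). As `g(u) = f(u) / u`, the mean value inequality gives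
`|g(u)| ≤ sup_{[0, u]} |f'|`. For `|z| ≥ 1/2` we conclude from `z g'(z) = f'(z) - g(z)`, and for
`|z| < 1/2` from the Cauchy estimate for `g` on the circle of radius `1/4` about `z`.
-/

open MeasureTheory Complex Metric Real ComplexConjugate

theorem integral_ball_pow_eq_zero (r : ℝ) {n : ℕ} (hn : n ≠ 0) :
    ∫ w in ball (0 : ℂ) r, w ^ n = 0 := by
  set u : Circle := Circle.exp (π / n)
  have hu : (u : ℂ) ^ n = -1 := by
    rw [Circle.coe_exp, ← Complex.exp_nat_mul, ← Complex.exp_pi_mul_I]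
    congr 1
    push_cast
    field_simp
  have hrot : ∫ w in ball (0 : ℂ) r, ((u : ℂ) * w) ^ n =
      ∫ w in ball (0 : ℂ) r, w ^ n := by
    simpa [rotation_apply, map_zero] using
      (rotation u).measurePreserving.setIntegral_preimage_emb
        (rotation u).toHomeomorph.measurableEmbedding (· ^ n) (ball 0 r)
  simp_rw [mul_pow] at hrot
  rw [integral_const_mul, hu] at hrot
  linear_combination -hrot / 2

theorem volume_real_ball (c : ℂ) {r : ℝ} (hr : 0 ≤ r) :
    volume.real (ball c r) = π * r ^ 2 := by
  rw [measureReal_def, Complex.volume_ball, ENNReal.toReal_mul, ENNReal.toReal_pow,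
    ENNReal.toReal_ofReal hr, ENNReal.coe_toReal, NNReal.coe_real_pi, mul_comm]

theorem setIntegral_ball_eq_smul_of_differentiableOn {E : Type*} [NormedAddCommGroup E]
    [NormedSpace ℂ E] [CompleteSpace E] {F : ℂ → E} {c : ℂ} {r R : ℝ}
    (hF : DifferentiableOn ℂ F (closedBall c R)) (hr : 0 ≤ r) (hrR : r < R) :
    ∫ w in ball c r, F w = (π * r ^ 2) • F c := by
  have hR : 0 < R := hr.trans_lt hrR
  have hp := DifferentiableOn.hasFPowerSeriesOnBall (R := R.toNNReal)
    (by rwa [Real.coe_toNNReal _ hR.le]) (by simpa using hR)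
  set p := cauchyPowerSeries F c R.toNNReal
  have hrp : (r.toNNReal : ENNReal) < p.radius := by
    refine lt_of_lt_of_le ?_ hp.r_le
    exact_mod_cast (Real.toNNReal_lt_toNNReal_iff hR).2 hrR
  have hsum : HasSum (fun n => ∫ w in ball (0 : ℂ) r, w ^ n • p.coeff n)
      (∫ w in ball (0 : ℂ) r, F (c + w)) := by
    refine hasSum_integral_of_dominated_convergence (fun n _ => ‖p.coeff n‖ * r ^ n)
      (fun n => by fun_prop) (fun n => ?_) (.of_forall fun _ => ?_)
      (integrableOn_const measure_ball_lt_top.ne) ?_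
    · refine (ae_restrict_iff' measurableSet_ball).2 (.of_forall fun w hw => ?_)
      rw [norm_smul, norm_pow, mul_comm]
      gcongr
      exact (mem_ball_zero_iff.1 hw).le
    · simpa [← FormalMultilinearSeries.norm_apply_eq_norm_coef, hr] using
        p.summable_norm_mul_pow hrp
    · refine (ae_restrict_iff' measurableSet_ball).2 (.of_forall fun w hw => ?_)
      simpa [FormalMultilinearSeries.apply_eq_pow_smul_coeff] using
        hp.hasSum (y := w) (by simpa using .inl ((mem_ball_zero_iff.1 hw).trans hrR))
  have hsingle : HasSum (fun n => ∫ w in ball (0 : ℂ) r, w ^ n • p.coeff n)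
      ((π * r ^ 2) • F c) := by
    convert hasSum_single (f := fun n => ∫ w in ball (0 : ℂ) r, w ^ n • p.coeff n) 0
      (fun n hn => by rw [integral_smul_const, integral_ball_pow_eq_zero r hn, zero_smul])
      using 1
    simp only [pow_zero, one_smul, setIntegral_const, volume_real_ball 0 hr,
      FormalMultilinearSeries.coeff, hp.coeff_zero]
  have htrans : ∫ w in ball c r, F w = ∫ w in ball (0 : ℂ) r, F (c + w) := by
    simpa using ((measurePreserving_add_left volume c).setIntegral_image_emb
      (measurableEmbedding_addLeft c) F (ball 0 r))
  rw [htrans, hsum.unique hsingle]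

theorem norm_mul_pi_mul_sq_le_setIntegral_norm {E : Type*} [NormedAddCommGroup E]
    [NormedSpace ℂ E] [CompleteSpace E] {F : ℂ → E} {c : ℂ} {r R : ℝ}
    (hF : DifferentiableOn ℂ F (closedBall c R)) (hr : 0 ≤ r) (hrR : r < R) :
    ‖F c‖ * (π * r ^ 2) ≤ ∫ w in ball c r, ‖F w‖ :=
  calc ‖F c‖ * (π * r ^ 2) = ‖∫ w in ball c r, F w‖ := by
        rw [setIntegral_ball_eq_smul_of_differentiableOn hF hr hrR, norm_smul, mul_comm,
          Real.norm_of_nonneg (by positivity)]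
    _ ≤ ∫ w in ball c r, ‖F w‖ := norm_integral_le_integral_norm _


theorem one_sub_norm_mul_le_norm_one_sub_conj_mul (w z : ℂ) :
    1 - ‖w‖ * ‖z‖ ≤ ‖1 - conj w * z‖ := by
  simpa [norm_mul] using norm_sub_norm_le (1 : ℂ) (conj w * z)

theorem integrableOn_div_norm_one_sub_conj_mul_pow {f : ℂ → ℝ} {z : ℂ} (hz : ‖z‖ < 1)
    (hf : IntegrableOn f (ball 0 1)) :
    IntegrableOn (fun w => f w / ‖1 - conj w * z‖ ^ 3) (ball 0 1) := by
  simp_rw [div_eq_mul_inv]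
  refine hf.mul_bdd (c := ((1 - ‖z‖) ^ 3)⁻¹) (by fun_prop) ?_
  refine (ae_restrict_iff' measurableSet_ball).2 (.of_forall fun w hw => ?_)
  have hw : ‖w‖ < 1 := mem_ball_zero_iff.1 hw
  have hzw : 1 - ‖z‖ ≤ ‖1 - conj w * z‖ := by
    nlinarith [one_sub_norm_mul_le_norm_one_sub_conj_mul w z, norm_nonneg z]
  rw [norm_inv, norm_pow, norm_norm]
  gcongr

theorem one_le_mul_div_norm_one_sub_conj_mul_pow {z v w : ℂ} {A : ℝ} (hz : ‖z‖ ≤ 1)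
    (hv : ‖v‖ < 1) (hwv : ‖w - v‖ < (1 - ‖v‖) / 2)
    (hA : ‖1 - conj v * z‖ ≤ A * (1 - ‖v‖)) :
    1 ≤ 2 * (A + 1) ^ 3 * (1 - ‖v‖) ^ 2 * ((1 - ‖w‖ ^ 2) / ‖1 - conj w * z‖ ^ 3) := by
  set δ := 1 - ‖v‖
  have hδ : 0 < δ := by linarith
  have hA0 : 0 ≤ A := nonneg_of_mul_nonneg_left ((norm_nonneg _).trans hA) hδ
  have hw : ‖w‖ ≤ 1 - δ / 2 := by
    linarith [norm_le_norm_add_norm_sub' w v]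
  have hD : ‖1 - conj w * z‖ ≤ (A + 1) * δ := by
    have hvw : ‖v - w‖ * ‖z‖ ≤ δ / 2 := by
      rw [norm_sub_rev]; nlinarith [norm_nonneg z, norm_nonneg (w - v)]
    calc ‖1 - conj w * z‖ = ‖(1 - conj v * z) + conj (v - w) * z‖ := by
          rw [map_sub]; ring_nf
      _ ≤ ‖1 - conj v * z‖ + ‖conj (v - w) * z‖ := norm_add_le _ _
      _ = ‖1 - conj v * z‖ + ‖v - w‖ * ‖z‖ := by rw [norm_mul, RCLike.norm_conj]
      _ ≤ (A + 1) * δ := by linarith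
  have hD0 : 0 < ‖1 - conj w * z‖ := by
    nlinarith [one_sub_norm_mul_le_norm_one_sub_conj_mul w z, norm_nonneg z, norm_nonneg w]
  rw [mul_div_assoc', le_div_iff₀ (by positivity), one_mul]
  calc ‖1 - conj w * z‖ ^ 3 ≤ ((A + 1) * δ) ^ 3 := by gcongr
    _ ≤ 2 * (A + 1) ^ 3 * δ ^ 2 * (1 - ‖w‖ ^ 2) := by
      have : δ ≤ 2 * (1 - ‖w‖ ^ 2) := by nlinarith [norm_nonneg w]
      calc ((A + 1) * δ) ^ 3 = (A + 1) ^ 3 * δ ^ 2 * δ := by ring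
        _ ≤ (A + 1) ^ 3 * δ ^ 2 * (2 * (1 - ‖w‖ ^ 2)) := by gcongr
        _ = _ := by ring

theorem norm_le_mul_setIntegral_kernel {E : Type*} [NormedAddCommGroup E] [NormedSpace ℂ E]
    [CompleteSpace E] {F : ℂ → E} {z v : ℂ} {A : ℝ} (hF : DifferentiableOn ℂ F (ball 0 1))
    (hint : IntegrableOn (fun w => ‖F w‖ * (1 - ‖w‖ ^ 2)) (ball 0 1))
    (hz : ‖z‖ < 1) (hv : ‖v‖ < 1) (hA : ‖1 - conj v * z‖ ≤ A * (1 - ‖v‖)) :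
    ‖F v‖ ≤ 8 * (A + 1) ^ 3 / π *
      ∫ w in ball (0 : ℂ) 1, ‖F w‖ * (1 - ‖w‖ ^ 2) / ‖1 - conj w * z‖ ^ 3 := by
  set δ := 1 - ‖v‖
  set K := fun w : ℂ => ‖F w‖ * (1 - ‖w‖ ^ 2) / ‖1 - conj w * z‖ ^ 3
  set c := 2 * (A + 1) ^ 3 * δ ^ 2
  have hδ : 0 < δ := by linarith
  have hsub : closedBall v (3 * δ / 4) ⊆ ball 0 1 :=
    closedBall_subset_ball' (by rw [dist_zero_right]; linarith)
  have hball : ball v (δ / 2) ⊆ ball 0 1 :=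
    ball_subset_ball' (by rw [dist_zero_right]; linarith)
  have hKint : IntegrableOn K (ball 0 1) := integrableOn_div_norm_one_sub_conj_mul_pow hz hint
  have hK0 : ∀ w ∈ ball (0 : ℂ) 1, 0 ≤ K w := fun w hw => by
    have : ‖w‖ ^ 2 ≤ 1 := pow_le_one₀ (norm_nonneg w) (mem_ball_zero_iff.1 hw).le
    have : 0 ≤ 1 - ‖w‖ ^ 2 := by linarith
    positivity
  have hpt : ∀ w ∈ ball v (δ / 2), ‖F w‖ ≤ c * K w := fun w hw => by
    have hw := one_le_mul_div_norm_one_sub_conj_mul_pow hz.le hv (mem_ball_iff_norm.1 hw) hA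
    calc ‖F w‖ ≤ ‖F w‖ * (c * ((1 - ‖w‖ ^ 2) / ‖1 - conj w * z‖ ^ 3)) :=
          le_mul_of_one_le_right (norm_nonneg _) hw
      _ = c * K w := by simp only [K]; ring
  have hFint : IntegrableOn (fun w => ‖F w‖) (ball v (δ / 2)) :=
    ((hF.continuousOn.mono hsub).norm.integrableOn_compact (isCompact_closedBall _ _)).mono_set
      (ball_subset_closedBall.trans (closedBall_subset_closedBall (by linarith)))
  have hmean := norm_mul_pi_mul_sq_le_setIntegral_norm (hF.mono hsub)
    (r := δ / 2) (by positivity) (by linarith)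
  have key : ‖F v‖ * (π * (δ / 2) ^ 2) ≤ c * ∫ w in ball (0 : ℂ) 1, K w :=
    calc ‖F v‖ * (π * (δ / 2) ^ 2) ≤ ∫ w in ball v (δ / 2), ‖F w‖ := hmean
      _ ≤ ∫ w in ball v (δ / 2), c * K w :=
        setIntegral_mono_on hFint ((hKint.mono_set hball).const_mul c) measurableSet_ball hpt
      _ = c * ∫ w in ball v (δ / 2), K w := integral_const_mul c _
      _ ≤ c * ∫ w in ball (0 : ℂ) 1, K w := by
        have hA0 : 0 ≤ A := nonneg_of_mul_nonneg_left ((norm_nonneg _).trans hA) hδ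
        exact mul_le_mul_of_nonneg_left (setIntegral_mono_set hKint
          ((ae_restrict_iff' measurableSet_ball).2 (.of_forall hK0)) hball.eventuallyLE)
          (by positivity)
  rw [div_mul_eq_mul_div, le_div_iff₀ pi_pos]
  refine le_of_mul_le_mul_right ?_ (pow_pos hδ 2)
  linarith

theorem norm_one_sub_conj_mul_le_of_mem_segment {z v : ℂ} (hz : ‖z‖ ≤ 1)
    (hv : v ∈ segment ℝ 0 z) : ‖1 - conj v * z‖ ≤ 2 * (1 - ‖v‖) := by
  rw [segment_eq_image'] at hv
  obtain ⟨t, ⟨ht0, ht1⟩, rfl⟩ := hv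
  have hreal : 1 - conj ((0 : ℂ) + t • (z - 0)) * z = ((1 - t * ‖z‖ ^ 2 : ℝ) : ℂ) := by
    simp [Complex.real_smul, mul_assoc, Complex.conj_mul']
  rw [hreal, Complex.norm_real, Real.norm_of_nonneg (by nlinarith [norm_nonneg z])]
  simp only [zero_add, sub_zero, norm_smul, Real.norm_of_nonneg ht0]
  nlinarith [norm_nonneg z, sq_nonneg (1 - ‖z‖)]

section BackwardShift

variable {f g : ℂ → ℂ}

theorem hasDerivAt_of_mul_eq {U : Set ℂ} (hU : IsOpen U) (hg : DifferentiableOn ℂ g U)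
    (hfg : ∀ w ∈ U, w * g w = f w) {z : ℂ} (hz : z ∈ U) :
    HasDerivAt f (g z + z * deriv g z) z := by
  have hmul := (hasDerivAt_id z).mul (hg.differentiableAt (hU.mem_nhds hz)).hasDerivAt
  rw [id, one_mul] at hmul
  exact hmul.congr_of_eventuallyEq
    (Filter.eventually_of_mem (hU.mem_nhds hz) fun w hw => (hfg w hw).symm)

theorem norm_le_of_forall_mem_segment_norm_deriv_le {R M : ℝ}
    (hg : DifferentiableOn ℂ g (ball 0 R))
    (hfg : ∀ w ∈ ball 0 R, w * g w = f w) {u : ℂ} (hu : u ∈ ball 0 R)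
    (hM : ∀ v ∈ segment ℝ 0 u, ‖deriv f v‖ ≤ M) : ‖g u‖ ≤ M := by
  have h0 : (0 : ℂ) ∈ ball 0 R := mem_ball_self (pos_of_mem_ball hu)
  rcases eq_or_ne u 0 with rfl | hu0
  · simpa [(hasDerivAt_of_mul_eq isOpen_ball hg hfg h0).deriv] using
      hM 0 (left_mem_segment ℝ 0 0)
  have hseg : segment ℝ 0 u ⊆ ball 0 R := (convex_ball 0 R).segment_subset h0 hu
  have hmvt := (convex_segment (0 : ℂ) u).norm_image_sub_le_of_norm_deriv_le
    (fun v hv => (hasDerivAt_of_mul_eq isOpen_ball hg hfg (hseg hv)).differentiableAt) hM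
    (left_mem_segment ℝ 0 u) (right_mem_segment ℝ 0 u)
  rw [← hfg u hu, ← hfg 0 h0, zero_mul, sub_zero, sub_zero, norm_mul, mul_comm] at hmvt
  exact le_of_mul_le_mul_right hmvt (norm_pos_iff.2 hu0)

theorem norm_deriv_le_of_half_le_norm {M : ℝ} (hg : DifferentiableOn ℂ g (ball 0 1))
    (hfg : ∀ w ∈ ball 0 1, w * g w = f w) {z : ℂ} (hz : z ∈ ball 0 1)
    (hz2 : 1 / 2 ≤ ‖z‖)
    (hM : ∀ v ∈ segment ℝ 0 z, ‖deriv f v‖ ≤ M) : ‖deriv g z‖ ≤ 4 * M := by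
  have hgz : ‖g z‖ ≤ M := norm_le_of_forall_mem_segment_norm_deriv_le hg hfg hz hM
  have hfz : ‖deriv f z‖ ≤ M := hM z (right_mem_segment ℝ 0 z)
  have hprod : z * deriv g z = deriv f z - g z := by
    rw [(hasDerivAt_of_mul_eq isOpen_ball hg hfg hz).deriv]; ring
  have : ‖z‖ * ‖deriv g z‖ ≤ 2 * M := by
    rw [← norm_mul, hprod]
    linarith [norm_sub_le (deriv f z) (g z)]
  nlinarith [norm_nonneg (deriv g z)]

theorem norm_deriv_le_of_norm_lt_half {M : ℝ} (hg : DifferentiableOn ℂ g (ball 0 1))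
    (hfg : ∀ w ∈ ball 0 1, w * g w = f w) {z : ℂ} (hz : ‖z‖ < 1 / 2)
    (hM : ∀ v ∈ closedBall (0 : ℂ) (3 / 4), ‖deriv f v‖ ≤ M) :
    ‖deriv g z‖ ≤ 4 * M := by
  have hsub : closedBall z (1 / 4) ⊆ ball 0 1 :=
    closedBall_subset_ball' (by rw [dist_zero_right]; linarith)
  have hsub' : closedBall z (1 / 4) ⊆ closedBall 0 (3 / 4) :=
    closedBall_subset_closedBall' (by rw [dist_zero_right]; linarith)
  have hsphere : ∀ u ∈ sphere z (1 / 4), ‖g u‖ ≤ M := fun u hu =>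
    norm_le_of_forall_mem_segment_norm_deriv_le hg hfg (hsub (sphere_subset_closedBall hu))
      fun v hv => hM v ((convex_closedBall 0 (3 / 4)).segment_subset
        (mem_closedBall_self (by norm_num)) (hsub' (sphere_subset_closedBall hu)) hv)
  have hcauchy := norm_deriv_le_of_forall_mem_sphere_norm_le (by norm_num)
    (hg.mono (by rwa [closure_ball z (by norm_num)])).diffContOnCl hsphere
  linarith

theorem norm_deriv_le_of_forall_norm_one_sub_conj_mul_le {M : ℝ}
    (hg : DifferentiableOn ℂ g (ball 0 1)) (hfg : ∀ w ∈ ball 0 1, w * g w = f w) {z : ℂ}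
    (hz : z ∈ ball 0 1)
    (hM : ∀ v ∈ ball (0 : ℂ) 1,
      ‖1 - conj v * z‖ ≤ 8 * (1 - ‖v‖) → ‖deriv f v‖ ≤ M) :
    ‖deriv g z‖ ≤ 4 * M := by
  have hz1 : ‖z‖ < 1 := mem_ball_zero_iff.1 hz
  rcases lt_or_ge ‖z‖ (1 / 2) with hz2 | hz2
  · refine norm_deriv_le_of_norm_lt_half hg hfg hz2 fun v hv => ?_
    have hv : ‖v‖ ≤ 3 / 4 := mem_closedBall_zero_iff.1 hv
    refine hM v (mem_ball_zero_iff.2 (by linarith)) ?_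
    calc ‖1 - conj v * z‖ ≤ ‖(1 : ℂ)‖ + ‖conj v * z‖ := norm_sub_le _ _
      _ = 1 + ‖v‖ * ‖z‖ := by rw [norm_one, norm_mul, RCLike.norm_conj]
      _ ≤ 8 * (1 - ‖v‖) := by nlinarith [norm_nonneg v]
  · refine norm_deriv_le_of_half_le_norm hg hfg hz hz2 fun v hv => ?_
    have hv1 : v ∈ ball (0 : ℂ) 1 :=
      (convex_ball 0 1).segment_subset (mem_ball_self one_pos) hz hv
    refine hM v hv1 ((norm_one_sub_conj_mul_le_of_mem_segment hz1.le hv).trans ?_)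
    linarith [mem_ball_zero_iff.1 hv1]

end BackwardShift

/-- Derivative estimate for the backward shift S_b(f)(z) = f(z)/z of an analytic
function with f(0)=0 whose derivative lies in the weighted Bergman space. -/
theorem stmt3 :
    ∃ C > (0 : ℝ), ∀ f g : ℂ → ℂ,
      DifferentiableOn ℂ f (Metric.ball 0 1) → f 0 = 0 →
      DifferentiableOn ℂ g (Metric.ball 0 1) →
      (∀ z ∈ Metric.ball (0 : ℂ) 1, z * g z = f z) →
      MeasureTheory.IntegrableOn (fun w : ℂ => ‖deriv f w‖ * (1 - ‖w‖ ^ 2))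
        (Metric.ball (0 : ℂ) 1) volume →
      ∀ z ∈ Metric.ball (0 : ℂ) 1,
        ‖deriv g z‖ ≤ C * ∫ w in Metric.ball (0 : ℂ) 1,
          ‖deriv f w‖ * (1 - ‖w‖ ^ 2) / ‖1 - (starRingEnd ℂ) w * z‖ ^ 3 := by
  refine ⟨4 * (8 * (8 + 1) ^ 3 / π), by positivity, fun f g hf _ hg hfg hint z hz => ?_⟩
  rw [mul_assoc]
  refine norm_deriv_le_of_forall_norm_one_sub_conj_mul_le hg hfg hz fun v hv hvz => ?_
  exact norm_le_mul_setIntegral_kernel (hf.deriv isOpen_ball) hint (mem_ball_zero_iff.1 hz)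
    (mem_ball_zero_iff.1 hv) hvz
end
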